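/- arXiv:1106.4104 — 9 statements merged into one kernel-verified Lean document; each statement's English description precedes it below -/
import Mathlib

section
/- Let f be an expansive homeomorphism of the compact metric space M with expansivity constant ρ. Then for every x ∈ M, W^s(x) = {y ∈ M : there exists N such that dist(f^n x, f^n y) ≤ ρ for all n ≥ N}, and W^u(x) = {y ∈ M : there exists N such that dist(f^{-n} x, f^{-n} y) ≤ ρ for all n ≥ N}. -/
/-!
If the orbits of `x` and `y` are eventually `ρ`-close in the future, then every cluster point
`(p, q)` of `n ↦ (fⁿ x, fⁿ y)` as `n → ∞` has `ρ`-close orbits for all integer times, so `p = q`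
by expansivity. By compactness the pairs therefore converge to the diagonal, i.e. to the
uniformity, which says `dist (fⁿ x) (fⁿ y) → 0`. The unstable case is the stable case for `f⁻¹`.
-/

open Set Filter Metric Topology

variable {M : Type*} [MetricSpace M] [CompactSpace M]

/-- `f` is expansive with expansivity constant `ρ`: if two orbits stay `ρ`-close for all
integer times, the points coincide. -/
def IsExpansiveWith (f : Equiv.Perm M) (ρ : ℝ) : Prop :=
  ∀ x y : M, (∀ n : ℤ, dist ((f ^ n) x) ((f ^ n) y) ≤ ρ) → x = y

/-- The stable set `W^s(x)`. -/
def stableSet (f : Equiv.Perm M) (x : M) : Set M :=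
  {y : M | Tendsto (fun n : ℤ => dist ((f ^ n) x) ((f ^ n) y)) atTop (𝓝 0)}

/-- The unstable set `W^u(x)`. -/
def unstableSet (f : Equiv.Perm M) (x : M) : Set M :=
  {y : M | Tendsto (fun n : ℤ => dist ((f ^ n) x) ((f ^ n) y)) atBot (𝓝 0)}

/-- The `ε`-stable set `W^s_ε(x)`. -/
def epsStable (f : Equiv.Perm M) (ε : ℝ) (x : M) : Set M :=
  {y : M | ∀ n : ℤ, 0 ≤ n → dist ((f ^ n) x) ((f ^ n) y) ≤ ε}

/-- The `ε`-unstable set `W^u_ε(x)`. -/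
def epsUnstable (f : Equiv.Perm M) (ε : ℝ) (x : M) : Set M :=
  {y : M | ∀ n : ℤ, n ≤ 0 → dist ((f ^ n) x) ((f ^ n) y) ≤ ε}

/-- Shadowing property: every `δ`-pseudo-orbit is `ε`-shadowed by a true orbit. -/
def HasShadowing (f : Equiv.Perm M) : Prop :=
  ∀ ε : ℝ, 0 < ε → ∃ δ : ℝ, 0 < δ ∧ ∀ y : ℤ → M,
    (∀ n : ℤ, dist (f (y n)) (y (n + 1)) < δ) →
      ∃ z : M, ∀ n : ℤ, dist ((f ^ n) z) (y n) ≤ ε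

/-- A rectangle: a nonempty set of diameter `< δ` closed under the bracket operation. -/
def IsRectangle (δ : ℝ) (br : M → M → M) (R : Set M) : Prop :=
  R.Nonempty ∧ Metric.diam R < δ ∧ ∀ x ∈ R, ∀ y ∈ R, br x y ∈ R

/-- Stable border `∂^s R`: points of `R` that are not interior points of
`W^u(x,R) = W^u_ε(x) ∩ R` in the subspace topology of `W^u_ε(x)`. -/
def stableBorder (f : Equiv.Perm M) (ε : ℝ) (R : Set M) : Set M :=
  {x : M | x ∈ R ∧ ¬ ∃ U : Set M, IsOpen U ∧ x ∈ U ∧ U ∩ epsUnstable f ε x ⊆ R}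

/-- Unstable border `∂^u R`: points of `R` that are not interior points of
`W^s(x,R) = W^s_ε(x) ∩ R` in the subspace topology of `W^s_ε(x)`. -/
def unstableBorder (f : Equiv.Perm M) (ε : ℝ) (R : Set M) : Set M :=
  {x : M | x ∈ R ∧ ¬ ∃ U : Set M, IsOpen U ∧ x ∈ U ∧ U ∩ epsStable f ε x ⊆ R}

/-- A Markov partition: a finite family of proper rectangles covering `M`, with pairwise
disjoint interiors, satisfying the Markov inclusions for the invariant fibers. -/
def IsMarkovPartition (f : Equiv.Perm M) (ε δ : ℝ) (br : M → M → M) {m : ℕ}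
    (R : Fin m → Set M) : Prop :=
  (∀ i, IsRectangle δ br (R i)) ∧
  (∀ i, R i = closure (interior (R i))) ∧
  (⋃ i, R i) = Set.univ ∧
  (∀ i j, i ≠ j → interior (R i) ∩ interior (R j) = ∅) ∧
  ∀ i j, ∀ x ∈ interior (R i) ∩ ⇑f ⁻¹' interior (R j),
    ⇑f '' (epsStable f ε x ∩ R i) ⊆ epsStable f ε (f x) ∩ R j ∧
    epsUnstable f ε (f x) ∩ R j ⊆ ⇑f '' (epsUnstable f ε x ∩ R i)

theorem Equiv.Perm.continuous_zpow {X : Type*} [TopologicalSpace X] {f : Equiv.Perm X}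
    (hf : Continuous f) (hf' : Continuous f.symm) : ∀ n : ℤ, Continuous ⇑(f ^ n)
  | (n : ℕ) => by rw [zpow_natCast, Equiv.Perm.coe_pow]; exact hf.iterate n
  | .negSucc n => by rw [zpow_negSucc, ← inv_pow, Equiv.Perm.coe_pow]; exact hf'.iterate _

section

variable {X : Type*} [MetricSpace X]

theorem stableSet_inv (f : Equiv.Perm X) (x : X) : stableSet f⁻¹ x = unstableSet f x := by
  ext y
  simp only [stableSet, unstableSet, mem_ofPred_eq, inv_zpow']
  exact ⟨fun h => by simpa only [Function.comp_def, neg_neg] using h.comp tendsto_neg_atBot_atTop,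
    fun h => h.comp tendsto_neg_atTop_atBot⟩

namespace IsExpansiveWith

variable {f : Equiv.Perm X} {ρ : ℝ}

theorem inv (hexp : IsExpansiveWith f ρ) : IsExpansiveWith f⁻¹ ρ := fun x y hxy =>
  hexp x y fun n => by simpa [inv_zpow'] using hxy (-n)

theorem eq_of_mapClusterPt (hexp : IsExpansiveWith f ρ) (hf : Continuous f)
    (hf' : Continuous f.symm) {x y p q : X} {N : ℤ}
    (hN : ∀ n : ℤ, N ≤ n → dist ((f ^ n) x) ((f ^ n) y) ≤ ρ)
    (hpq : MapClusterPt (p, q) atTop fun n : ℤ => ((f ^ n) x, (f ^ n) y)) : p = q := by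
  refine hexp p q fun m => ?_
  have hcont : Continuous fun z : X × X => dist ((f ^ m) z.1) ((f ^ m) z.2) :=
    have := Equiv.Perm.continuous_zpow hf hf' m
    (this.comp continuous_fst).dist (this.comp continuous_snd)
  refine isClosed_Iic.mem_of_mapClusterPt (hpq.continuousAt_comp hcont.continuousAt) ?_
  filter_upwards [eventually_ge_atTop (N - m)] with n hn
  simpa [← Equiv.Perm.mul_apply, ← zpow_add] using hN (m + n) (by linarith)

theorem tendsto_dist_zpow [CompactSpace X] (hexp : IsExpansiveWith f ρ) (hf : Continuous f)
    (hf' : Continuous f.symm) {x y : X} {N : ℤ}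
    (hN : ∀ n : ℤ, N ≤ n → dist ((f ^ n) x) ((f ^ n) y) ≤ ρ) :
    Tendsto (fun n : ℤ => dist ((f ^ n) x) ((f ^ n) y)) atTop (𝓝 0) := by
  have hdiag : Tendsto (fun n : ℤ => ((f ^ n) x, (f ^ n) y)) atTop (𝓝ˢ (diagonal X)) :=
    isCompact_univ.tendsto_nhdsSet_of_mapClusterPt (by simp)
      fun _ _ hpq => hexp.eq_of_mapClusterPt hf hf' hN hpq
  rw [nhdsSet_diagonal_eq_uniformity] at hdiag
  exact tendsto_uniformity_iff_dist_tendsto_zero.1 hdiag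

theorem stableSet_eq [CompactSpace X] (hexp : IsExpansiveWith f ρ) (hf : Continuous f)
    (hf' : Continuous f.symm) (hρ : 0 < ρ) (x : X) :
    stableSet f x = {y : X | ∃ N : ℤ, ∀ n : ℤ, N ≤ n → dist ((f ^ n) x) ((f ^ n) y) ≤ ρ} := by
  ext y
  refine ⟨fun hy => ?_, fun ⟨N, hN⟩ => hexp.tendsto_dist_zpow hf hf' hN⟩
  obtain ⟨N, hN⟩ := eventually_atTop.1 (hy.eventually_lt_const hρ)
  exact ⟨N, fun n hn => (hN n hn).le⟩

end IsExpansiveWith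

end

/-- For an expansive homeomorphism with expansivity constant `ρ`, the stable set
is exactly the set of points whose orbit is eventually `ρ`-close to that of `x` in the future,
and similarly for the unstable set in the past. -/
theorem stmt_0 (f : Equiv.Perm M) (hf : Continuous ⇑f) (hf' : Continuous ⇑f.symm)
    (ρ : ℝ) (hρ : 0 < ρ) (hexp : IsExpansiveWith f ρ) (x : M) :
    stableSet f x =
      {y : M | ∃ N : ℤ, ∀ n : ℤ, N ≤ n → dist ((f ^ n) x) ((f ^ n) y) ≤ ρ} ∧
    unstableSet f x =
      {y : M | ∃ N : ℤ, ∀ n : ℤ, N ≤ n → dist ((f ^ (-n)) x) ((f ^ (-n)) y) ≤ ρ} := by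
  refine ⟨hexp.stableSet_eq hf hf' hρ x, ?_⟩
  rw [← stableSet_inv, hexp.inv.stableSet_eq hf' hf hρ x]
  simp only [inv_zpow']
end

section
/- Assume f is an expansive homeomorphism of the compact metric space M with expansivity constant ρ and has the shadowing property. Then for every ε with 0 < ε ≤ ρ/2 there exists δ > 0 such that for all x, y ∈ M with dist(x, y) < δ, the set W^s_ε(x) ∩ W^u_ε(y) contains exactly one point. -/
open Set Filter Metric Topology

variable {M : Type*} [MetricSpace M] [CompactSpace M]

/-- If `f` is expansive with constant `ρ` and has the shadowing property, then for
every `0 < ε ≤ ρ/2` there is `δ > 0` such that whenever `dist x y < δ`, the intersection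
`W^s_ε(x) ∩ W^u_ε(y)` contains exactly one point. -/
theorem stmt_2 (f : Equiv.Perm M) (hf : Continuous ⇑f) (hf' : Continuous ⇑f.symm)
    (ρ : ℝ) (hρ : 0 < ρ) (hexp : IsExpansiveWith f ρ) (hsh : HasShadowing f) :
    ∀ ε : ℝ, 0 < ε → ε ≤ ρ / 2 → ∃ δ : ℝ, 0 < δ ∧ ∀ x y : M, dist x y < δ →
      ∃! z : M, z ∈ epsStable f ε x ∩ epsUnstable f ε y := by
  intro ε hε hε2
  obtain ⟨δ₀, hδ₀, hshad⟩ := hsh (ε / 2) (by linarith)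
  refine ⟨min δ₀ (ε / 2), lt_min hδ₀ (by linarith), ?_⟩
  intro x y hxy
  have hxy₀ : dist x y < δ₀ := lt_of_lt_of_le hxy (min_le_left _ _)
  have hxy₂ : dist x y < ε / 2 := lt_of_lt_of_le hxy (min_le_right _ _)
  set w : ℤ → M := fun n => if n < 0 then (f ^ n) y else (f ^ n) x with hw
  have key : ∀ (n : ℤ) (p : M), f ((f ^ n) p) = (f ^ (n + 1)) p := by
    intro n p
    rw [add_comm, zpow_add, zpow_one]
    rfl
  have hpo : ∀ n : ℤ, dist (f (w n)) (w (n + 1)) < δ₀ := by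
    intro n
    rcases lt_trichotomy n (-1) with h | h | h
    · have h1 : n < 0 := by omega
      have h2 : n + 1 < 0 := by omega
      simp only [hw, if_pos h1, if_pos h2, key, dist_self]
      exact hδ₀
    · subst h
      have h1 : (-1 : ℤ) < 0 := by norm_num
      have h2 : ¬ ((-1 : ℤ) + 1 < 0) := by norm_num
      simp only [hw, if_pos h1, if_neg h2, key]
      norm_num
      rwa [dist_comm]
    · have h1 : ¬ (n < 0) := by omega
      have h2 : ¬ (n + 1 < 0) := by omega
      simp only [hw, if_neg h1, if_neg h2, key, dist_self]
      exact hδ₀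
  obtain ⟨z, hz⟩ := hshad w hpo
  have hzs : z ∈ epsStable f ε x := by
    intro n hn
    have h1 : ¬ (n < 0) := by omega
    have := hz n
    rw [hw] at this
    simp only [if_neg h1] at this
    rw [dist_comm]
    linarith
  have hzu : z ∈ epsUnstable f ε y := by
    intro n hn
    rcases lt_or_eq_of_le hn with h | h
    · have := hz n
      rw [hw] at this
      simp only [if_pos h] at this
      rw [dist_comm]
      linarith
    · subst h
      have := hz 0
      rw [hw] at this
      simp only [if_neg (lt_irrefl (0 : ℤ))] at this
      have h0 : (f ^ (0 : ℤ)) z = z := by simp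
      have h0' : (f ^ (0 : ℤ)) y = y := by simp
      rw [h0] at this
      rw [h0']
      have h1 : dist y x ≤ ε / 2 := by rw [dist_comm]; linarith
      have h2 : dist x z ≤ ε / 2 := by rw [dist_comm]; simpa using this
      calc dist y z ≤ dist y x + dist x z := dist_triangle _ _ _
        _ ≤ ε / 2 + ε / 2 := add_le_add h1 h2
        _ = ε := by ring
  refine ⟨z, ⟨hzs, hzu⟩, ?_⟩
  rintro z' ⟨hs', hu'⟩
  apply hexp
  intro n
  rcases le_total 0 n with hn | hn
  · calc dist ((f ^ n) z') ((f ^ n) z)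
        ≤ dist ((f ^ n) x) ((f ^ n) z') + dist ((f ^ n) x) ((f ^ n) z) := by
          rw [dist_comm ((f ^ n) x)]; exact dist_triangle _ _ _
      _ ≤ ε + ε := add_le_add (hs' n hn) (hzs n hn)
      _ ≤ ρ := by linarith
  · calc dist ((f ^ n) z') ((f ^ n) z)
        ≤ dist ((f ^ n) y) ((f ^ n) z') + dist ((f ^ n) y) ((f ^ n) z) := by
          rw [dist_comm ((f ^ n) y)]; exact dist_triangle _ _ _
      _ ≤ ε + ε := add_le_add (hu' n hn) (hzu n hn)
      _ ≤ ρ := by linarith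
end

section
/- Let R be a rectangle. If y ∈ ∂^s R then W^s(y, R) ⊆ ∂^s R, and if y ∈ ∂^u R then W^u(y, R) ⊆ ∂^u R. -/
open Set Filter Metric Topology

variable {M : Type*} [MetricSpace M] [CompactSpace M]

lemma cont_zpow' (f : Equiv.Perm M) (hf : Continuous ⇑f) (hf' : Continuous ⇑f.symm)
    (n : ℤ) : Continuous ⇑(f ^ n) := by
  cases n with
  | ofNat m =>
    rw [Int.ofNat_eq_coe, zpow_natCast, Equiv.Perm.coe_pow]
    exact hf.iterate m
  | negSucc m =>
    rw [zpow_negSucc, ← inv_pow, Equiv.Perm.coe_pow]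
    have h : ⇑(f⁻¹) = ⇑f.symm := rfl
    rw [h]
    exact hf'.iterate (m + 1)

lemma mem_epsStable_of_tendsto' (f : Equiv.Perm M) (hf : Continuous ⇑f)
    (hf' : Continuous ⇑f.symm) (ε : ℝ) {w u : ℕ → M} {y u' : M}
    (hw : Tendsto w atTop (𝓝 y)) (hu : Tendsto u atTop (𝓝 u'))
    (h : ∀ k, u k ∈ epsStable f ε (w k)) : u' ∈ epsStable f ε y := by
  intro n hn
  have hc := cont_zpow' f hf hf' n
  have ht : Tendsto (fun k => dist ((f ^ n) (w k)) ((f ^ n) (u k))) atTop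
      (𝓝 (dist ((f ^ n) y) ((f ^ n) u'))) :=
    (((hc.tendsto y).comp hw).dist ((hc.tendsto u').comp hu))
  exact le_of_tendsto ht (Filter.Eventually.of_forall fun k => h k n hn)

lemma mem_epsUnstable_of_tendsto' (f : Equiv.Perm M) (hf : Continuous ⇑f)
    (hf' : Continuous ⇑f.symm) (ε : ℝ) {w u : ℕ → M} {y u' : M}
    (hw : Tendsto w atTop (𝓝 y)) (hu : Tendsto u atTop (𝓝 u'))
    (h : ∀ k, u k ∈ epsUnstable f ε (w k)) : u' ∈ epsUnstable f ε y := by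
  intro n hn
  have hc := cont_zpow' f hf hf' n
  have ht : Tendsto (fun k => dist ((f ^ n) (w k)) ((f ^ n) (u k))) atTop
      (𝓝 (dist ((f ^ n) y) ((f ^ n) u'))) :=
    (((hc.tendsto y).comp hw).dist ((hc.tendsto u').comp hu))
  exact le_of_tendsto ht (Filter.Eventually.of_forall fun k => h k n hn)

lemma keyA (f : Equiv.Perm M) (hf : Continuous ⇑f) (hf' : Continuous ⇑f.symm)
    (ε δ : ℝ) (hε0 : 0 < ε) (br : M → M → M)
    (hbr : ∀ x y : M, dist x y < δ → epsStable f ε x ∩ epsUnstable f ε y = {br x y})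
    (y z : M) (hyz : dist y z < δ) (hz : z ∈ epsStable f ε y)
    (U : Set M) (hU : IsOpen U) (hzU : z ∈ U) :
    ∃ η > 0, ∀ w : M, dist w y < η → dist w z < δ → br w z ∈ U := by
  by_contra hcon
  push_neg at hcon
  have hseq : ∀ k : ℕ, ∃ w : M, dist w y < 1 / ((k : ℝ) + 1) ∧ dist w z < δ ∧ br w z ∉ U := by
    intro k
    obtain ⟨w, hw1, hw2, hw3⟩ := hcon (1 / ((k : ℝ) + 1)) (by positivity)
    exact ⟨w, hw1, hw2, hw3⟩
  choose w hw1 hw2 hw3 using hseq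
  set u : ℕ → M := fun k => br (w k) z with hu_def
  have hmem : ∀ k, u k ∈ epsStable f ε (w k) ∩ epsUnstable f ε z := by
    intro k
    rw [hbr (w k) z (hw2 k)]
    rfl
  have hwy : Tendsto w atTop (𝓝 y) := by
    rw [tendsto_iff_dist_tendsto_zero]
    refine squeeze_zero (fun k => dist_nonneg) (fun k => (hw1 k).le) ?_
    exact tendsto_one_div_add_atTop_nhds_zero_nat
  obtain ⟨u', -, φ, hφ, hu'⟩ := isCompact_univ.tendsto_subseq (fun k => Set.mem_univ (u k))
  have hws : Tendsto (w ∘ φ) atTop (𝓝 y) := hwy.comp hφ.tendsto_atTop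
  have h1 : u' ∈ epsStable f ε y :=
    mem_epsStable_of_tendsto' f hf hf' ε hws hu' (fun k => (hmem (φ k)).1)
  have h2 : u' ∈ epsUnstable f ε z :=
    mem_epsUnstable_of_tendsto' f hf hf' ε (tendsto_const_nhds) hu' (fun k => (hmem (φ k)).2)
  have hz' : z ∈ epsStable f ε y ∩ epsUnstable f ε z :=
    ⟨hz, fun n hn => by simpa using hε0.le⟩
  have heq := hbr y z hyz
  have hu'z : u' = z := by
    have h3 : u' ∈ ({br y z} : Set M) := heq ▸ Set.mem_inter h1 h2
    have h4 : z ∈ ({br y z} : Set M) := heq ▸ hz'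
    rw [Set.mem_singleton_iff] at h3 h4
    exact h3.trans h4.symm
  have hc : u' ∈ Uᶜ :=
    hU.isClosed_compl.mem_of_tendsto hu' (Filter.Eventually.of_forall fun k => hw3 (φ k))
  exact hc (hu'z ▸ hzU)

lemma keyB (f : Equiv.Perm M) (hf : Continuous ⇑f) (hf' : Continuous ⇑f.symm)
    (ε δ : ℝ) (hε0 : 0 < ε) (br : M → M → M)
    (hbr : ∀ x y : M, dist x y < δ → epsStable f ε x ∩ epsUnstable f ε y = {br x y})
    (y z : M) (hzy : dist z y < δ) (hz : z ∈ epsUnstable f ε y)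
    (U : Set M) (hU : IsOpen U) (hzU : z ∈ U) :
    ∃ η > 0, ∀ w : M, dist w y < η → dist z w < δ → br z w ∈ U := by
  by_contra hcon
  push_neg at hcon
  have hseq : ∀ k : ℕ, ∃ w : M, dist w y < 1 / ((k : ℝ) + 1) ∧ dist z w < δ ∧ br z w ∉ U := by
    intro k
    obtain ⟨w, hw1, hw2, hw3⟩ := hcon (1 / ((k : ℝ) + 1)) (by positivity)
    exact ⟨w, hw1, hw2, hw3⟩
  choose w hw1 hw2 hw3 using hseq
  set u : ℕ → M := fun k => br z (w k) with hu_def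
  have hmem : ∀ k, u k ∈ epsStable f ε z ∩ epsUnstable f ε (w k) := by
    intro k
    rw [hbr z (w k) (hw2 k)]
    rfl
  have hwy : Tendsto w atTop (𝓝 y) := by
    rw [tendsto_iff_dist_tendsto_zero]
    refine squeeze_zero (fun k => dist_nonneg) (fun k => (hw1 k).le) ?_
    exact tendsto_one_div_add_atTop_nhds_zero_nat
  obtain ⟨u', -, φ, hφ, hu'⟩ := isCompact_univ.tendsto_subseq (fun k => Set.mem_univ (u k))
  have hws : Tendsto (w ∘ φ) atTop (𝓝 y) := hwy.comp hφ.tendsto_atTop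
  have h1 : u' ∈ epsStable f ε z :=
    mem_epsStable_of_tendsto' f hf hf' ε (tendsto_const_nhds) hu' (fun k => (hmem (φ k)).1)
  have h2 : u' ∈ epsUnstable f ε y :=
    mem_epsUnstable_of_tendsto' f hf hf' ε hws hu' (fun k => (hmem (φ k)).2)
  have hz' : z ∈ epsStable f ε z ∩ epsUnstable f ε y :=
    ⟨fun n hn => by simpa using hε0.le, hz⟩
  have heq := hbr z y hzy
  have hu'z : u' = z := by
    have h3 : u' ∈ ({br z y} : Set M) := heq ▸ Set.mem_inter h1 h2
    have h4 : z ∈ ({br z y} : Set M) := heq ▸ hz'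
    rw [Set.mem_singleton_iff] at h3 h4
    exact h3.trans h4.symm
  have hc : u' ∈ Uᶜ :=
    hU.isClosed_compl.mem_of_tendsto hu' (Filter.Eventually.of_forall fun k => hw3 (φ k))
  exact hc (hu'z ▸ hzU)

/-- For a rectangle `R`: if `y ∈ ∂^s R` then `W^s(y,R) ⊆ ∂^s R`, and if
`y ∈ ∂^u R` then `W^u(y,R) ⊆ ∂^u R`. -/
theorem stmt_6 (f : Equiv.Perm M) (hf : Continuous ⇑f) (hf' : Continuous ⇑f.symm)
    (ρ ε δ : ℝ) (hρ : 0 < ρ) (hexp : IsExpansiveWith f ρ)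
    (hε0 : 0 < ε) (hε : ε ≤ ρ / 4) (hδ : 0 < δ) (br : M → M → M)
    (hbr : ∀ x y : M, dist x y < δ → epsStable f ε x ∩ epsUnstable f ε y = {br x y})
    (R : Set M) (hR : IsRectangle δ br R) :
    (∀ y ∈ stableBorder f ε R, epsStable f ε y ∩ R ⊆ stableBorder f ε R) ∧
    (∀ y ∈ unstableBorder f ε R, epsUnstable f ε y ∩ R ⊆ unstableBorder f ε R) := by
  obtain ⟨hRne, hRdiam, hRbr⟩ := hR
  have hRb : Bornology.IsBounded R := isCompact_univ.isBounded.subset (Set.subset_univ R)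
  have hdist : ∀ a ∈ R, ∀ b ∈ R, dist a b < δ := fun a ha b hb =>
    lt_of_le_of_lt (Metric.dist_le_diam_of_mem hRb ha hb) hRdiam
  constructor
  · rintro y ⟨hyR, hyn⟩ z ⟨hzs, hzR⟩
    refine ⟨hzR, ?_⟩
    rintro ⟨U, hUo, hzU, hUsub⟩
    apply hyn
    have hyz : dist y z < δ := hdist y hyR z hzR
    obtain ⟨η, hη, hkey⟩ := keyA f hf hf' ε δ hε0 br hbr y z hyz hzs U hUo hzU
    refine ⟨Metric.ball y (min η (δ - dist y z)), isOpen_ball,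
      Metric.mem_ball_self (lt_min hη (by linarith)), ?_⟩
    rintro w ⟨hwb, hwu⟩
    rw [Metric.mem_ball] at hwb
    have hwη : dist w y < η := hwb.trans_le (min_le_left _ _)
    have hwz : dist w z < δ := by
      have h2 := hwb.trans_le (min_le_right _ _)
      calc dist w z ≤ dist w y + dist y z := dist_triangle _ _ _
        _ < (δ - dist y z) + dist y z := by linarith
        _ = δ := by ring
    have huU : br w z ∈ U := hkey w hwη hwz
    have humem : br w z ∈ epsStable f ε w ∩ epsUnstable f ε z := by
      rw [hbr w z hwz]; rfl
    have huR : br w z ∈ R := hUsub ⟨huU, humem.2⟩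
    have hws : w ∈ epsStable f ε (br w z) := fun n hn => by
      rw [dist_comm]; exact humem.1 n hn
    have hd : dist (br w z) y < δ := hdist _ huR y hyR
    have hwbr : w ∈ ({br (br w z) y} : Set M) := by
      rw [← hbr (br w z) y hd]; exact ⟨hws, hwu⟩
    rw [Set.mem_singleton_iff] at hwbr
    rw [hwbr]
    exact hRbr _ huR y hyR
  · rintro y ⟨hyR, hyn⟩ z ⟨hzu, hzR⟩
    refine ⟨hzR, ?_⟩
    rintro ⟨U, hUo, hzU, hUsub⟩
    apply hyn
    have hzy : dist z y < δ := hdist z hzR y hyR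
    obtain ⟨η, hη, hkey⟩ := keyB f hf hf' ε δ hε0 br hbr y z hzy hzu U hUo hzU
    refine ⟨Metric.ball y (min η (δ - dist z y)), isOpen_ball,
      Metric.mem_ball_self (lt_min hη (by linarith)), ?_⟩
    rintro w ⟨hwb, hws⟩
    rw [Metric.mem_ball] at hwb
    have hwη : dist w y < η := hwb.trans_le (min_le_left _ _)
    have hzw : dist z w < δ := by
      have h2 := hwb.trans_le (min_le_right _ _)
      calc dist z w ≤ dist z y + dist y w := dist_triangle _ _ _
        _ = dist z y + dist w y := by rw [dist_comm y w]
        _ < dist z y + (δ - dist z y) := by linarith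
        _ = δ := by ring
    have huU : br z w ∈ U := hkey w hwη hzw
    have humem : br z w ∈ epsStable f ε z ∩ epsUnstable f ε w := by
      rw [hbr z w hzw]; rfl
    have huR : br z w ∈ R := hUsub ⟨huU, humem.1⟩
    have hwu : w ∈ epsUnstable f ε (br z w) := fun n hn => by
      rw [dist_comm]; exact humem.2 n hn
    have hd : dist y (br z w) < δ := hdist y hyR _ huR
    have hwbr : w ∈ ({br y (br z w)} : Set M) := by
      rw [← hbr y (br z w) hd]; exact ⟨hws, hwu⟩
    rw [Set.mem_singleton_iff] at hwbr
    rw [hwbr]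
    exact hRbr y hyR _ huR
end

section
/- Assume there exists ε̄ with 0 < ε̄ ≤ ε and 2ε̄ < δ such that for every y ∈ M, whenever V is a neighborhood of y in the subspace W^u_ε̄(y) and U is a neighborhood of y in the subspace W^s_ε̄(y), the set {[v, u] : v ∈ V, u ∈ U} is a neighborhood of y in M. Then for every closed rectangle R, the topological frontier of R equals ∂^s R ∪ ∂^u R. -/
open Set Filter Metric Topology

variable {M : Type*} [MetricSpace M] [CompactSpace M]

/-- Assume a local product structure: there is `ε̄` with `0 < ε̄ ≤ ε`, `2ε̄ < δ`,
such that for every `y`, whenever `V` is a neighborhood of `y` in the subspace `W^u_ε̄(y)` and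
`U` is a neighborhood of `y` in the subspace `W^s_ε̄(y)`, the set `{[v,u] : v ∈ V, u ∈ U}` is a
neighborhood of `y` in `M`. Then for every closed rectangle `R`, the topological frontier of
`R` equals `∂^s R ∪ ∂^u R`. -/
theorem stmt_7 (f : Equiv.Perm M) (hf : Continuous ⇑f) (hf' : Continuous ⇑f.symm)
    (ρ ε δ : ℝ) (hρ : 0 < ρ) (hexp : IsExpansiveWith f ρ)
    (hε0 : 0 < ε) (hε : ε ≤ ρ / 4) (hδ : 0 < δ) (br : M → M → M)
    (hbr : ∀ x y : M, dist x y < δ → epsStable f ε x ∩ epsUnstable f ε y = {br x y})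
    (hloc : ∃ εb : ℝ, 0 < εb ∧ εb ≤ ε ∧ 2 * εb < δ ∧
      ∀ (y : M) (V U : Set M),
        y ∈ V → V ⊆ epsUnstable f εb y →
        (∃ O : Set M, IsOpen O ∧ y ∈ O ∧ O ∩ epsUnstable f εb y ⊆ V) →
        y ∈ U → U ⊆ epsStable f εb y →
        (∃ O : Set M, IsOpen O ∧ y ∈ O ∧ O ∩ epsStable f εb y ⊆ U) →
        Set.image2 br V U ∈ 𝓝 y) :
    ∀ R : Set M, IsRectangle δ br R → IsClosed R →
      frontier R = stableBorder f ε R ∪ unstableBorder f ε R := by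
  obtain ⟨εb, hεb0, hεbε, hεbδ, hlp⟩ := hloc
  intro R hR hRc
  obtain ⟨hne, hdiam, hbrR⟩ := hR
  have hus : ∀ x : M, epsUnstable f εb x ⊆ epsUnstable f ε x :=
    fun x y hy n hn => (hy n hn).trans hεbε
  have hss : ∀ x : M, epsStable f εb x ⊆ epsStable f ε x :=
    fun x y hy n hn => (hy n hn).trans hεbε
  ext x
  rw [frontier, hRc.closure_eq]
  simp only [Set.mem_diff, Set.mem_union]
  constructor
  · rintro ⟨hxR, hxI⟩
    by_contra h
    push_neg at h
    obtain ⟨h1, h2⟩ := h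
    have hx1 : ∃ O : Set M, IsOpen O ∧ x ∈ O ∧ O ∩ epsUnstable f ε x ⊆ R := by
      by_contra hc
      exact h1 ⟨hxR, hc⟩
    have hx2 : ∃ O : Set M, IsOpen O ∧ x ∈ O ∧ O ∩ epsStable f ε x ⊆ R := by
      by_contra hc
      exact h2 ⟨hxR, hc⟩
    obtain ⟨O1, hO1o, hxO1, hO1⟩ := hx1
    obtain ⟨O2, hO2o, hxO2, hO2⟩ := hx2
    have hxu : x ∈ epsUnstable f εb x := fun n _ => by simp [hεb0.le]
    have hxs : x ∈ epsStable f εb x := fun n _ => by simp [hεb0.le]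
    have hmem : Set.image2 br (O1 ∩ epsUnstable f εb x) (O2 ∩ epsStable f εb x) ∈ 𝓝 x := by
      refine hlp x _ _ ⟨hxO1, hxu⟩ (fun y hy => hy.2) ⟨O1, hO1o, hxO1, subset_rfl⟩
        ⟨hxO2, hxs⟩ (fun y hy => hy.2) ⟨O2, hO2o, hxO2, subset_rfl⟩
    have hsub : Set.image2 br (O1 ∩ epsUnstable f εb x) (O2 ∩ epsStable f εb x) ⊆ R := by
      rintro z ⟨v, hv, u, hu, rfl⟩
      exact hbrR v (hO1 ⟨hv.1, hus x hv.2⟩) u (hO2 ⟨hu.1, hss x hu.2⟩)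
    exact hxI (mem_interior_iff_mem_nhds.2 (Filter.mem_of_superset hmem hsub))
  · rintro (⟨hxR, h⟩ | ⟨hxR, h⟩) <;>
      exact ⟨hxR, fun hxI =>
        h ⟨interior R, isOpen_interior, hxI, fun y hy => interior_subset hy.1⟩⟩
end

section
/- Let R_1, …, R_m be a Markov partition for f. If int(R_i) ∩ f^{-1}(int(R_j)) ≠ ∅, then for every y ∈ R_i ∩ f^{-1}(R_j): f(W^s(y, R_i)) ⊆ W^s(f y, R_j) and f(W^u(y, R_i)) ⊇ W^u(f y, R_j). -/
open Set Filter Metric Topology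

variable {M : Type*} [MetricSpace M] [CompactSpace M]

/-- For a Markov partition, if `int(R_i) ∩ f⁻¹(int(R_j)) ≠ ∅`, then the Markov
inclusions hold for every `y ∈ R_i ∩ f⁻¹(R_j)`. -/
theorem stmt_10 (f : Equiv.Perm M) (hf : Continuous ⇑f) (hf' : Continuous ⇑f.symm)
    (ρ ε δ : ℝ) (hρ : 0 < ρ) (hexp : IsExpansiveWith f ρ)
    (hε0 : 0 < ε) (hε : ε ≤ ρ / 4) (hδ : 0 < δ) (br : M → M → M)
    (hbr : ∀ x y : M, dist x y < δ → epsStable f ε x ∩ epsUnstable f ε y = {br x y})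
    {m : ℕ} (R : Fin m → Set M) (hMP : IsMarkovPartition f ε δ br R) (i j : Fin m)
    (hne : (interior (R i) ∩ ⇑f ⁻¹' interior (R j)).Nonempty) :
    ∀ y ∈ R i ∩ ⇑f ⁻¹' R j,
      ⇑f '' (epsStable f ε y ∩ R i) ⊆ epsStable f ε (f y) ∩ R j ∧
      epsUnstable f ε (f y) ∩ R j ⊆ ⇑f '' (epsUnstable f ε y ∩ R i) := by
  obtain ⟨hrect, -, -, -, hmark⟩ := hMP
  obtain ⟨x, hx⟩ := hne
  obtain ⟨hms, hmu⟩ := hmark i j x hx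
  have hxRi : x ∈ R i := interior_subset hx.1
  have hfxRj : f x ∈ R j := interior_subset hx.2
  -- basic facts
  have hshift : ∀ (n : ℤ) (a : M), (f ^ (n + 1)) a = (f ^ n) (f a) := by
    intro n a; rw [zpow_add_one]; rfl
  have hdlt : ∀ (k : Fin m), ∀ a ∈ R k, ∀ b ∈ R k, dist a b < δ := by
    intro k a ha b hb
    exact lt_of_le_of_lt
      (dist_le_diam_of_mem (isCompact_univ.isBounded.subset (subset_univ _)) ha hb)
      (hrect k).2.1
  have hbrmem : ∀ a b : M, dist a b < δ →
      br a b ∈ epsStable f ε a ∧ br a b ∈ epsUnstable f ε b := by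
    intro a b hab
    have h := hbr a b hab
    have : br a b ∈ epsStable f ε a ∩ epsUnstable f ε b := by
      rw [h]; exact rfl
    exact this
  have hexp2 : ∀ a b : M, (∀ n : ℤ, dist ((f ^ n) a) ((f ^ n) b) ≤ 2 * ε) → a = b := by
    intro a b h
    exact hexp a b fun n => le_trans (h n) (by linarith)
  intro y hy
  obtain ⟨hyi, hyj⟩ := hy
  have hyj : f y ∈ R j := hyj
  constructor
  · -- stable inclusion
    rintro - ⟨z, ⟨hzs, hzi⟩, rfl⟩
    have hfzs : f z ∈ epsStable f ε (f y) := by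
      intro n hn
      rw [← hshift n y, ← hshift n z]
      exact hzs (n + 1) (by omega)
    refine ⟨hfzs, ?_⟩
    -- f z ∈ R j
    obtain ⟨hq1, hq2⟩ := hbrmem x z (hdlt i x hxRi z hzi)
    have hqRi : br x z ∈ R i := (hrect i).2.2 x hxRi z hzi
    have hfq : f (br x z) ∈ epsStable f ε (f x) ∩ R j := hms ⟨br x z, ⟨hq1, hqRi⟩, rfl⟩
    obtain ⟨hp1, hp2⟩ := hbrmem (f y) (f (br x z)) (hdlt j (f y) hyj (f (br x z)) hfq.2)
    have hpRj : br (f y) (f (br x z)) ∈ R j := (hrect j).2.2 (f y) hyj (f (br x z)) hfq.2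
    have : f z = br (f y) (f (br x z)) := by
      apply hexp2
      intro n
      rcases le_or_gt 0 n with hn | hn
      · calc dist ((f ^ n) (f z)) ((f ^ n) (br (f y) (f (br x z))))
            ≤ dist ((f ^ n) (f z)) ((f ^ n) (f y)) + dist ((f ^ n) (f y)) ((f ^ n) (br (f y) (f (br x z)))) :=
              dist_triangle _ _ _
          _ ≤ ε + ε := add_le_add (by rw [dist_comm]; exact hfzs n hn) (hp1 n hn)
          _ = 2 * ε := by ring
      · calc dist ((f ^ n) (f z)) ((f ^ n) (br (f y) (f (br x z))))
            ≤ dist ((f ^ n) (f z)) ((f ^ n) (f (br x z))) + dist ((f ^ n) (f (br x z))) ((f ^ n) (br (f y) (f (br x z)))) :=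
              dist_triangle _ _ _
          _ ≤ ε + ε := by
              refine add_le_add ?_ (hp2 n (by omega))
              rw [← hshift n z, ← hshift n (br x z)]
              exact hq2 (n + 1) (by omega)
          _ = 2 * ε := by ring
    rw [this]; exact hpRj
  · -- unstable inclusion
    rintro w ⟨hwu, hwj⟩
    refine ⟨f.symm w, ⟨?_, ?_⟩, f.apply_symm_apply w⟩
    · -- f.symm w ∈ epsUnstable f ε y
      intro n hn
      have h := hwu (n - 1) (by omega)
      have e1 : (f ^ (n - 1)) (f y) = (f ^ n) y := by
        rw [← hshift (n - 1) y, sub_add_cancel]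
      have e2 : (f ^ (n - 1)) w = (f ^ n) (f.symm w) := by
        conv_lhs => rw [← f.apply_symm_apply w]
        rw [← hshift (n - 1) (f.symm w), sub_add_cancel]
      rwa [e1, e2] at h
    · -- f.symm w ∈ R i
      have hzu : f.symm w ∈ epsUnstable f ε y := by
        intro n hn
        have h := hwu (n - 1) (by omega)
        have e1 : (f ^ (n - 1)) (f y) = (f ^ n) y := by
          rw [← hshift (n - 1) y, sub_add_cancel]
        have e2 : (f ^ (n - 1)) w = (f ^ n) (f.symm w) := by
          conv_lhs => rw [← f.apply_symm_apply w]
          rw [← hshift (n - 1) (f.symm w), sub_add_cancel]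
        rwa [e1, e2] at h
      obtain ⟨hq'1, hq'2⟩ := hbrmem w (f x) (hdlt j w hwj (f x) hfxRj)
      have hq'Rj : br w (f x) ∈ R j := (hrect j).2.2 w hwj (f x) hfxRj
      obtain ⟨q'', ⟨hq''u, hq''Ri⟩, hfq''⟩ := hmu ⟨hq'2, hq'Rj⟩
      obtain ⟨hp'1, hp'2⟩ := hbrmem q'' y (hdlt i q'' hq''Ri y hyi)
      have hp'Ri : br q'' y ∈ R i := (hrect i).2.2 q'' hq''Ri y hyi
      have : f.symm w = br q'' y := by
        apply hexp2
        intro n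
        rcases le_or_gt n 0 with hn | hn
        · calc dist ((f ^ n) (f.symm w)) ((f ^ n) (br q'' y))
              ≤ dist ((f ^ n) (f.symm w)) ((f ^ n) y) + dist ((f ^ n) y) ((f ^ n) (br q'' y)) :=
                dist_triangle _ _ _
            _ ≤ ε + ε := add_le_add (by rw [dist_comm]; exact hzu n hn) (hp'2 n hn)
            _ = 2 * ε := by ring
        · calc dist ((f ^ n) (f.symm w)) ((f ^ n) (br q'' y))
              ≤ dist ((f ^ n) (f.symm w)) ((f ^ n) q'') + dist ((f ^ n) q'') ((f ^ n) (br q'' y)) :=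
                dist_triangle _ _ _
            _ ≤ ε + ε := by
                refine add_le_add ?_ (hp'1 n (by omega))
                have e2 : (f ^ n) (f.symm w) = (f ^ (n - 1)) w := by
                  conv_rhs => rw [← f.apply_symm_apply w]
                  rw [← hshift (n - 1) (f.symm w), sub_add_cancel]
                have e3 : (f ^ n) q'' = (f ^ (n - 1)) (br w (f x)) := by
                  rw [← hfq'', ← hshift (n - 1) q'', sub_add_cancel]
                rw [e2, e3]
                exact hq'1 (n - 1) (by omega)
            _ = 2 * ε := by ring
      rw [this]; exact hp'Ri
end

section
/- Let R_1, …, R_m be a Markov partition for f in which each R_i has diameter at most ε. If (j_n)_{n≥0} is a sequence of indices with int(R_{j_n}) ∩ f^{-1}(int(R_{j_{n+1}})) ≠ ∅ for all n ≥ 0, and x ∈ ⋂_{n≥0} f^{-n}(R_{j_n}), then ⋂_{n≥0} f^{-n}(R_{j_n}) = W^s(x, R_{j_0}). -/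
open Set Filter Metric Topology

variable {M : Type*} [MetricSpace M] [CompactSpace M]

private lemma perm_zpow_add_apply (f : Equiv.Perm M) (a b : ℤ) (t : M) :
    (f ^ (a + b)) t = (f ^ a) ((f ^ b) t) := by
  rw [zpow_add, Equiv.Perm.mul_apply]

private lemma perm_apply_shift (f : Equiv.Perm M) (k : ℤ) (t : M) :
    (f ^ k) (f t) = (f ^ (k + 1)) t := by
  rw [zpow_add, zpow_one, Equiv.Perm.mul_apply]

private lemma perm_shift_apply (f : Equiv.Perm M) (k : ℤ) (t : M) :
    f ((f ^ k) t) = (f ^ (k + 1)) t := by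
  rw [add_comm, zpow_add, zpow_one, Equiv.Perm.mul_apply]

private lemma bounded_all (s : Set M) : Bornology.IsBounded s :=
  (isCompact_univ.isBounded).subset (Set.subset_univ s)

/-- One-step extension of the Markov property to boundary points, via brackets
and expansivity. -/
private lemma markov_step (f : Equiv.Perm M) (ρ ε δ : ℝ)
    (hexp : IsExpansiveWith f ρ) (hε0 : 0 < ε) (hε : ε ≤ ρ / 4)
    (br : M → M → M)
    (hbr : ∀ x y : M, dist x y < δ → epsStable f ε x ∩ epsUnstable f ε y = {br x y})
    (Ri Rj : Set M) (hRi : IsRectangle δ br Ri) (hRj : IsRectangle δ br Rj)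
    (hMark : ∀ x ∈ interior Ri ∩ ⇑f ⁻¹' interior Rj,
      ⇑f '' (epsStable f ε x ∩ Ri) ⊆ epsStable f ε (f x) ∩ Rj)
    (z : M) (hz : z ∈ interior Ri ∩ ⇑f ⁻¹' interior Rj)
    (v u : M) (hv : v ∈ Ri) (hfv : f v ∈ Rj)
    (hu : u ∈ epsStable f ε v) (huR : u ∈ Ri) :
    f u ∈ Rj := by
  have hzRi : z ∈ Ri := interior_subset hz.1
  -- the bracket w = [z, u] ∈ R_i
  have hdzu : dist z u < δ :=
    lt_of_le_of_lt (Metric.dist_le_diam_of_mem (bounded_all Ri) hzRi huR) hRi.2.1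
  have hw : br z u ∈ epsStable f ε z ∩ epsUnstable f ε u := by
    rw [hbr z u hdzu]; exact Set.mem_singleton _
  set w := br z u with hwdef
  have hwRi : w ∈ Ri := hRi.2.2 z hzRi u huR
  -- Markov at the interior point z : f w ∈ R_j
  have hfw : f w ∈ epsStable f ε (f z) ∩ Rj :=
    hMark z hz ⟨w, ⟨hw.1, hwRi⟩, rfl⟩
  -- the bracket p = [f v, f w] ∈ R_j
  have hdfvfw : dist (f v) (f w) < δ :=
    lt_of_le_of_lt (Metric.dist_le_diam_of_mem (bounded_all Rj) hfv hfw.2) hRj.2.1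
  have hp : br (f v) (f w) ∈ epsStable f ε (f v) ∩ epsUnstable f ε (f w) := by
    rw [hbr (f v) (f w) hdfvfw]; exact Set.mem_singleton _
  set p := br (f v) (f w) with hpdef
  have hpRj : p ∈ Rj := hRj.2.2 (f v) hfv (f w) hfw.2
  -- p = f u by expansivity
  have key : p = f u := by
    apply hexp
    intro n
    rcases le_or_gt 0 n with hn | hn
    · -- forward times: both p and f u are ε-close to the orbit of f v
      have h1 : dist ((f ^ n) (f v)) ((f ^ n) p) ≤ ε := hp.1 n hn
      have h2 : dist ((f ^ n) (f v)) ((f ^ n) (f u)) ≤ ε := by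
        rw [perm_apply_shift, perm_apply_shift]
        exact hu (n + 1) (by omega)
      calc dist ((f ^ n) p) ((f ^ n) (f u))
          ≤ dist ((f ^ n) p) ((f ^ n) (f v)) + dist ((f ^ n) (f v)) ((f ^ n) (f u)) :=
            dist_triangle _ _ _
        _ ≤ ε + ε := by rw [dist_comm ((f ^ n) p)]; exact add_le_add h1 h2
        _ ≤ ρ := by linarith
    · -- backward times: both p and f u are ε-close to the orbit of f w
      have h1 : dist ((f ^ n) (f w)) ((f ^ n) p) ≤ ε := hp.2 n (le_of_lt hn)
      have h2 : dist ((f ^ n) (f w)) ((f ^ n) (f u)) ≤ ε := by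
        rw [perm_apply_shift, perm_apply_shift]
        rw [dist_comm]
        exact hw.2 (n + 1) (by omega)
      calc dist ((f ^ n) p) ((f ^ n) (f u))
          ≤ dist ((f ^ n) p) ((f ^ n) (f w)) + dist ((f ^ n) (f w)) ((f ^ n) (f u)) :=
            dist_triangle _ _ _
        _ ≤ ε + ε := by rw [dist_comm ((f ^ n) p)]; exact add_le_add h1 h2
        _ ≤ ρ := by linarith
  rw [← key]; exact hpRj

/-- For a Markov partition whose pieces have diameter at most `ε`, if
`(j_n)_{n≥0}` satisfies `int(R_{j_n}) ∩ f⁻¹(int(R_{j_{n+1}})) ≠ ∅` for all `n ≥ 0` and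
`x ∈ ⋂_{n≥0} f^{-n}(R_{j_n})`, then `⋂_{n≥0} f^{-n}(R_{j_n}) = W^s(x, R_{j_0})`. -/
theorem stmt_11 (f : Equiv.Perm M) (hf : Continuous ⇑f) (hf' : Continuous ⇑f.symm)
    (ρ ε δ : ℝ) (hρ : 0 < ρ) (hexp : IsExpansiveWith f ρ)
    (hε0 : 0 < ε) (hε : ε ≤ ρ / 4) (hδ : 0 < δ) (br : M → M → M)
    (hbr : ∀ x y : M, dist x y < δ → epsStable f ε x ∩ epsUnstable f ε y = {br x y})
    {m : ℕ} (R : Fin m → Set M) (hMP : IsMarkovPartition f ε δ br R)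
    (hdiam : ∀ i, Metric.diam (R i) ≤ ε)
    (j : ℕ → Fin m)
    (hj : ∀ n : ℕ, (interior (R (j n)) ∩ ⇑f ⁻¹' interior (R (j (n + 1)))).Nonempty)
    (x : M) (hx : x ∈ ⋂ n : ℕ, ⇑(f ^ (n : ℤ)) ⁻¹' R (j n)) :
    (⋂ n : ℕ, ⇑(f ^ (n : ℤ)) ⁻¹' R (j n)) = epsStable f ε x ∩ R (j 0) := by
  obtain ⟨hrect, hproper, hcover, hdisj, hmark⟩ := hMP
  have hxn : ∀ n : ℕ, (f ^ (n : ℤ)) x ∈ R (j n) := fun n => Set.mem_iInter.1 hx n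
  ext y
  simp only [Set.mem_iInter, Set.mem_preimage, Set.mem_inter_iff]
  constructor
  · intro hy
    refine ⟨?_, ?_⟩
    · intro k hk
      have hk' : k = ((k.toNat : ℕ) : ℤ) := (Int.toNat_of_nonneg hk).symm
      rw [hk']
      calc dist ((f ^ ((k.toNat : ℕ) : ℤ)) x) ((f ^ ((k.toNat : ℕ) : ℤ)) y)
          ≤ Metric.diam (R (j k.toNat)) :=
            Metric.dist_le_diam_of_mem (bounded_all _) (hxn k.toNat) (hy k.toNat)
        _ ≤ ε := hdiam _
    · have h0 := hy 0
      simpa using h0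
  · rintro ⟨hyS, hy0⟩
    -- forward iterates of y stay in the prescribed rectangles
    have hstab : ∀ n : ℕ, (f ^ (n : ℤ)) y ∈ epsStable f ε ((f ^ (n : ℤ)) x) := by
      intro n k hk
      rw [← perm_zpow_add_apply, ← perm_zpow_add_apply]
      exact hyS (k + n) (by omega)
    intro n
    induction n with
    | zero => simpa using hy0
    | succ n ih =>
      obtain ⟨z, hz⟩ := hj n
      have step := markov_step f ρ ε δ hexp hε0 hε br hbr (R (j n)) (R (j (n + 1)))
        (hrect _) (hrect _)
        (fun a ha => (hmark (j n) (j (n + 1)) a ha).1) z hz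
        ((f ^ (n : ℤ)) x) ((f ^ (n : ℤ)) y) (hxn n) ?_ (hstab n) ih
      · have : ((n + 1 : ℕ) : ℤ) = (n : ℤ) + 1 := by push_cast; ring
        rw [this, ← perm_shift_apply]
        exact step
      · have : ((n + 1 : ℕ) : ℤ) = (n : ℤ) + 1 := by push_cast; ring
        have h := hxn (n + 1)
        rw [this, ← perm_shift_apply] at h
        exact h
end

section
/- The map θ : Σ(P) → M is surjective: for every x ∈ M there exists q ∈ Σ(P) with dist(f^n x, q_n) ≤ β for all n ∈ ℤ, so that x = θ(q). -/
open Set Filter Metric Topology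

variable {M : Type*} [MetricSpace M] [CompactSpace M]

/-- The map `θ : Σ(P) → M` is surjective: for every `x ∈ M` there is an
`α`-pseudo-orbit `q` with entries in `P` such that `dist(f^n x, q_n) ≤ β` for all `n ∈ ℤ`
(so that `x = θ(q)`). -/
theorem stmt_13 (f : Equiv.Perm M) (hf : Continuous ⇑f) (hf' : Continuous ⇑f.symm)
    (ρ : ℝ) (hρ : 0 < ρ) (hexp : IsExpansiveWith f ρ)
    (β α γ : ℝ) (hβ0 : 0 < β) (hβ : β < ρ / 2) (hα0 : 0 < α)
    (hshad : ∀ y : ℤ → M, (∀ n : ℤ, dist (f (y n)) (y (n + 1)) < α) →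
      ∃ z : M, ∀ n : ℤ, dist ((f ^ n) z) (y n) ≤ β)
    (hγ0 : 0 < γ) (hγβ : γ < β) (hγα : γ < α / 2)
    (hγ : ∀ x y : M, dist x y < γ → dist (f x) (f y) < α / 2)
    {m : ℕ} (p : Fin m → M) (hP : ∀ x : M, ∃ i : Fin m, dist x (p i) < γ) :
    ∀ x : M, ∃ q : ℤ → M, (∀ n : ℤ, ∃ i : Fin m, q n = p i) ∧
      (∀ n : ℤ, dist (f (q n)) (q (n + 1)) < α) ∧
      ∀ n : ℤ, dist ((f ^ n) x) (q n) ≤ β := by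
  intro x
  choose i hi using fun n : ℤ => hP ((f ^ n) x)
  refine ⟨fun n => p (i n), fun n => ⟨i n, rfl⟩, fun n => ?_, fun n => (hi n).le.trans hγβ.le⟩
  have h1 : dist (f (p (i n))) (f ((f ^ n) x)) < α / 2 := hγ _ _ (by rw [dist_comm]; exact hi n)
  have h2 : f ((f ^ n) x) = (f ^ (n + 1)) x := by
    rw [add_comm, zpow_one_add]; exact (Equiv.Perm.mul_apply _ _ _).symm
  calc dist (f (p (i n))) (p (i (n + 1)))
      ≤ dist (f (p (i n))) ((f ^ (n + 1)) x) + dist ((f ^ (n + 1)) x) (p (i (n + 1))) :=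
        dist_triangle _ _ _
    _ < α / 2 + α / 2 := by exact add_lt_add (h2 ▸ h1) ((hi _).trans hγα)
    _ = α := by ring
end

section
/- Assume 2β < min(ε, δ/2), and for each i let T_i = θ({q ∈ Σ(P) : q_0 = p_i}). If q ∈ Σ(P) with q_0 = p_s and q_1 = p_t, and x = θ(q), then f(W^s(x, T_s)) ⊆ W^s(f x, T_t) and f(W^u(x, T_s)) ⊇ W^u(f x, T_t), where W^s(x, T) = W^s_ε(x) ∩ T and W^u(x, T) = W^u_ε(x) ∩ T. -/
open Set Filter Metric Topology

variable {M : Type*} [MetricSpace M] [CompactSpace M]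

/-- Glue two pseudo-orbits for the "stable" direction: follow `a` (shifted by one)
in negative time and `b` (shifted by one) in nonnegative time. -/
def glueS {M : Type*} (a b : ℤ → M) : ℤ → M := fun n => if n < 0 then a (n + 1) else b (n + 1)

/-- Glue two pseudo-orbits for the "unstable" direction: follow `a` in nonpositive
time and `b` (shifted back by one) in positive time. -/
def glueU {M : Type*} (a b : ℤ → M) : ℤ → M := fun n => if n ≤ 0 then a n else b (n - 1)

/-- With `2β < min(ε, δ/2)` and `T_i = θ({q ∈ Σ(P) : q_0 = p_i})`: if
`q ∈ Σ(P)` with `q_0 = p_s`, `q_1 = p_t`, and `x = θ(q)`, then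
`f(W^s(x,T_s)) ⊆ W^s(f x, T_t)` and `f(W^u(x,T_s)) ⊇ W^u(f x, T_t)`. -/
theorem stmt_16 (f : Equiv.Perm M) (hf : Continuous ⇑f) (hf' : Continuous ⇑f.symm)
    (ρ ε δ : ℝ) (hρ : 0 < ρ) (hexp : IsExpansiveWith f ρ)
    (hε0 : 0 < ε) (hε : ε ≤ ρ / 4) (hδ : 0 < δ) (br : M → M → M)
    (hbr : ∀ x y : M, dist x y < δ → epsStable f ε x ∩ epsUnstable f ε y = {br x y})
    (β α γ : ℝ) (hβ0 : 0 < β) (hβ : β < ρ / 2) (hα0 : 0 < α)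
    (hshad : ∀ y : ℤ → M, (∀ n : ℤ, dist (f (y n)) (y (n + 1)) < α) →
      ∃ z : M, ∀ n : ℤ, dist ((f ^ n) z) (y n) ≤ β)
    (hγ0 : 0 < γ) (hγβ : γ < β) (hγα : γ < α / 2)
    (hγ : ∀ x y : M, dist x y < γ → dist (f x) (f y) < α / 2)
    {m : ℕ} (p : Fin m → M) (hP : ∀ x : M, ∃ i : Fin m, dist x (p i) < γ)
    (θ : (ℤ → M) → M)
    (hθ : ∀ q : ℤ → M, (∀ n : ℤ, ∃ i : Fin m, q n = p i) →
      (∀ n : ℤ, dist (f (q n)) (q (n + 1)) < α) →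
      ∀ n : ℤ, dist ((f ^ n) (θ q)) (q n) ≤ β)
    (h2β : 2 * β < min ε (δ / 2))
    (q : ℤ → M) (hqP : ∀ n : ℤ, ∃ i : Fin m, q n = p i)
    (hqα : ∀ n : ℤ, dist (f (q n)) (q (n + 1)) < α)
    (s t : Fin m) (hq0 : q 0 = p s) (hq1 : q 1 = p t)
    (Ts Tt : Set M)
    (hTs : Ts = θ '' {q' : ℤ → M | (∀ n : ℤ, ∃ i : Fin m, q' n = p i) ∧
      (∀ n : ℤ, dist (f (q' n)) (q' (n + 1)) < α) ∧ q' 0 = p s})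
    (hTt : Tt = θ '' {q' : ℤ → M | (∀ n : ℤ, ∃ i : Fin m, q' n = p i) ∧
      (∀ n : ℤ, dist (f (q' n)) (q' (n + 1)) < α) ∧ q' 0 = p t}) :
    ⇑f '' (epsStable f ε (θ q) ∩ Ts) ⊆ epsStable f ε (f (θ q)) ∩ Tt ∧
    epsUnstable f ε (f (θ q)) ∩ Tt ⊆ ⇑f '' (epsUnstable f ε (θ q) ∩ Ts) := by
  have hpow : ∀ (n : ℤ) (x : M), (f ^ (n + 1)) x = (f ^ n) (f x) := by
    intro n x; rw [zpow_add_one]; rfl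
  have hpow' : ∀ (n : ℤ) (x : M), (f ^ n) x = (f ^ (n - 1)) (f x) := by
    intro n x
    have h := hpow (n - 1) x
    rw [show n - 1 + 1 = n from by ring] at h
    exact h
  have hpow2 : ∀ (n : ℤ) (y : M), (f ^ n) (f.symm y) = (f ^ (n - 1)) y := by
    intro n y
    rw [hpow' n (f.symm y), Equiv.apply_symm_apply]
  have h2βε : 2 * β < ε := lt_of_lt_of_le h2β (min_le_left _ _)
  have hρbound : β + (β + ε) ≤ ρ := by linarith
  have hθq := hθ q hqP hqα
  constructor
  · rintro _ ⟨y, ⟨hyS, hyT⟩, rfl⟩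
    rw [hTs] at hyT
    obtain ⟨q', ⟨hP', hα', h0'⟩, rfl⟩ := hyT
    have hθq' := hθ q' hP' hα'
    have hrP : ∀ n : ℤ, ∃ i, glueS q' q n = p i := by
      intro n; unfold glueS; split_ifs
      · exact hP' _
      · exact hqP _
    have hrα : ∀ n : ℤ, dist (f (glueS q' q n)) (glueS q' q (n + 1)) < α := by
      intro n; unfold glueS
      rcases lt_trichotomy n (-1) with h | h | h
      · rw [if_pos (by omega), if_pos (by omega)]; exact hα' (n + 1)
      · subst h
        rw [if_pos (by omega), if_neg (by omega)]
        norm_num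
        rw [h0', ← hq0]
        simpa using hqα 0
      · rw [if_neg (by omega), if_neg (by omega)]; exact hqα (n + 1)
    have hr0 : glueS q' q 0 = p t := by
      unfold glueS; rw [if_neg (by norm_num)]; simpa using hq1
    have hθr := hθ (glueS q' q) hrP hrα
    have key : θ (glueS q' q) = f (θ q') := by
      apply hexp
      intro n
      have h1 : dist ((f ^ n) (θ (glueS q' q))) (glueS q' q n) ≤ β := hθr n
      have h2 : dist (glueS q' q n) ((f ^ n) (f (θ q'))) ≤ β + ε := by
        rw [← hpow n (θ q')]
        unfold glueS; split_ifs with h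
        · rw [dist_comm]
          exact le_trans (hθq' (n + 1)) (by linarith)
        · have ha : dist (q (n + 1)) ((f ^ (n + 1)) (θ q)) ≤ β := by
            rw [dist_comm]; exact hθq (n + 1)
          have hb : dist ((f ^ (n + 1)) (θ q)) ((f ^ (n + 1)) (θ q')) ≤ ε :=
            hyS (n + 1) (by omega)
          calc dist (q (n + 1)) ((f ^ (n + 1)) (θ q'))
              ≤ dist (q (n + 1)) ((f ^ (n + 1)) (θ q)) +
                dist ((f ^ (n + 1)) (θ q)) ((f ^ (n + 1)) (θ q')) := dist_triangle _ _ _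
            _ ≤ β + ε := by linarith
      calc dist ((f ^ n) (θ (glueS q' q))) ((f ^ n) (f (θ q')))
          ≤ dist ((f ^ n) (θ (glueS q' q))) (glueS q' q n) +
            dist (glueS q' q n) ((f ^ n) (f (θ q'))) := dist_triangle _ _ _
        _ ≤ ρ := by linarith
    refine ⟨?_, ?_⟩
    · intro n hn
      rw [← hpow n (θ q), ← hpow n (θ q')]
      exact hyS (n + 1) (by omega)
    · rw [hTt]
      exact ⟨glueS q' q, ⟨hrP, hrα, hr0⟩, key⟩
  · rintro y ⟨hyU, hyT⟩
    rw [hTt] at hyT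
    obtain ⟨q'', ⟨hP'', hα'', h0''⟩, rfl⟩ := hyT
    have hθq'' := hθ q'' hP'' hα''
    have hrP : ∀ n : ℤ, ∃ i, glueU q q'' n = p i := by
      intro n; unfold glueU; split_ifs
      · exact hqP _
      · exact hP'' _
    have hrα : ∀ n : ℤ, dist (f (glueU q q'' n)) (glueU q q'' (n + 1)) < α := by
      intro n; unfold glueU
      rcases lt_trichotomy n 0 with h | h | h
      · rw [if_pos (by omega), if_pos (by omega)]; exact hqα n
      · subst h
        rw [if_pos (by omega), if_neg (by omega)]
        norm_num
        rw [h0'', ← hq1]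
        simpa using hqα 0
      · rw [if_neg (by omega), if_neg (by omega)]
        have := hα'' (n - 1)
        rw [show n - 1 + 1 = n from by ring] at this
        simpa [show n + 1 - 1 = n - 1 + 1 from by ring,
          show n - 1 + 1 = n from by ring] using this
    have hr0 : glueU q q'' 0 = p s := by
      unfold glueU; rw [if_pos le_rfl]; exact hq0
    have hθr := hθ (glueU q q'') hrP hrα
    have key : θ (glueU q q'') = f.symm (θ q'') := by
      apply hexp
      intro n
      have h1 : dist ((f ^ n) (θ (glueU q q''))) (glueU q q'' n) ≤ β := hθr n
      have h2 : dist (glueU q q'' n) ((f ^ n) (f.symm (θ q''))) ≤ β + ε := by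
        rw [hpow2 n]
        unfold glueU; split_ifs with h
        · have ha : dist (q n) ((f ^ n) (θ q)) ≤ β := by
            rw [dist_comm]; exact hθq n
          have hb : dist ((f ^ n) (θ q)) ((f ^ (n - 1)) (θ q'')) ≤ ε := by
            rw [hpow' n (θ q)]
            exact hyU (n - 1) (by omega)
          calc dist (q n) ((f ^ (n - 1)) (θ q''))
              ≤ dist (q n) ((f ^ n) (θ q)) +
                dist ((f ^ n) (θ q)) ((f ^ (n - 1)) (θ q'')) := dist_triangle _ _ _
            _ ≤ β + ε := by linarith
        · rw [dist_comm]
          exact le_trans (hθq'' (n - 1)) (by linarith)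
      calc dist ((f ^ n) (θ (glueU q q''))) ((f ^ n) (f.symm (θ q'')))
          ≤ dist ((f ^ n) (θ (glueU q q''))) (glueU q q'' n) +
            dist (glueU q q'' n) ((f ^ n) (f.symm (θ q''))) := dist_triangle _ _ _
        _ ≤ ρ := by linarith
    refine ⟨f.symm (θ q''), ⟨?_, ?_⟩, f.apply_symm_apply _⟩
    · intro n hn
      rw [hpow2 n (θ q''), hpow' n (θ q)]
      exact hyU (n - 1) (by omega)
    · rw [hTs]
      exact ⟨glueU q q'', ⟨hrP, hrα, hr0⟩, key⟩
end

section
/- Let R_1, …, R_m be a Markov partition for f of diameter less than ρ, with transition matrix A, and let a ∈ Σ_A. Then for every N ∈ ℕ, the set K_N(a) = ⋂_{j=-N}^{N} f^{-j}(R_{a_j}) is a nonempty closed rectangle. -/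
open Set Filter Metric Topology

variable {M : Type*} [MetricSpace M] [CompactSpace M]

/-!
Expansivity makes the bracket unique, and this upgrades the Markov inclusions, which are assumed
only at interior points, to every point of `R_i ∩ f⁻¹ R_j` for an allowed transition `i → j`.
Hence stable sets propagate membership in a cylinder forward in time and unstable sets propagate it
backward: the bracket `[x, y]` of two points of `K_N(a)` follows `x` for `j ≥ 0` and `y` for
`j ≤ 0`, so it stays in `K_N(a)`; bracketing a point of a cylinder with `f x` for some
`x ∈ int R_{a_{k-1}} ∩ f⁻¹ int R_{a_k}` extends the cylinder one step back, which gives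
nonemptiness. Closedness and the diameter bound come from the `R_i`.
-/

namespace Equiv.Perm

variable {α : Type*} (f : Equiv.Perm α) (n : ℤ) (x : α)

theorem zpow_apply_apply : (f ^ n) (f x) = (f ^ (n + 1)) x := by
  rw [zpow_add_one, mul_apply]

theorem apply_zpow_apply : f ((f ^ n) x) = (f ^ (n + 1)) x := by
  rw [add_comm, zpow_add, zpow_one, mul_apply]

theorem zpow_symm_apply : (f ^ n) (f.symm x) = (f ^ (n - 1)) x := by
  rw [zpow_sub_one, mul_apply, inv_def]

theorem symm_zpow_apply : f.symm ((f ^ n) x) = (f ^ (n - 1)) x := by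
  rw [sub_eq_neg_add, zpow_add, zpow_neg_one, mul_apply, inv_def]

end Equiv.Perm

theorem continuous_zpow_apply {α : Type*} [TopologicalSpace α] {f : Equiv.Perm α}
    (hf : Continuous ⇑f) (hf' : Continuous ⇑f.symm) (n : ℤ) : Continuous ⇑(f ^ n) := by
  induction n using Int.induction_on with
  | zero => exact continuous_id
  | succ k ih =>
    rw [zpow_add_one, Equiv.Perm.coe_mul]
    exact ih.comp hf
  | pred k ih =>
    rw [zpow_sub_one, Equiv.Perm.coe_mul, Equiv.Perm.inv_def]
    exact ih.comp hf'

section Dynamics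

variable {X : Type*} [MetricSpace X] {f : Equiv.Perm X} {ε ρ δ : ℝ} {x y z w : X}

theorem mem_epsStable_comm : y ∈ epsStable f ε x ↔ x ∈ epsStable f ε y := by
  simp only [epsStable, Set.mem_ofPred_eq, dist_comm]

theorem mem_epsUnstable_comm : y ∈ epsUnstable f ε x ↔ x ∈ epsUnstable f ε y := by
  simp only [epsUnstable, Set.mem_ofPred_eq, dist_comm]

theorem apply_mem_epsStable (h : y ∈ epsStable f ε x) : f y ∈ epsStable f ε (f x) := by
  intro n hn
  rw [f.zpow_apply_apply, f.zpow_apply_apply]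
  exact h (n + 1) (by omega)

theorem symm_mem_epsUnstable (h : y ∈ epsUnstable f ε x) :
    f.symm y ∈ epsUnstable f ε (f.symm x) := by
  intro n hn
  rw [f.zpow_symm_apply, f.zpow_symm_apply]
  exact h (n - 1) (by omega)

/-- Both orbits stay `ε`-close to that of `x` in forward time and to that of `f y` in backward
time, hence `2ε`-close to each other at all times. -/
theorem IsExpansiveWith.eq_of_mem_epsStable_of_symm_mem_epsUnstable (hexp : IsExpansiveWith f ρ)
    (hε : 2 * ε ≤ ρ) (hz : z ∈ epsStable f ε x) (hw : w ∈ epsStable f ε x)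
    (hz' : f.symm z ∈ epsUnstable f ε y) (hw' : f.symm w ∈ epsUnstable f ε y) : z = w := by
  refine hexp z w fun n => ?_
  rcases le_or_gt 0 n with hn | hn
  · calc dist ((f ^ n) z) ((f ^ n) w)
        ≤ dist ((f ^ n) x) ((f ^ n) z) + dist ((f ^ n) x) ((f ^ n) w) := dist_triangle_left _ _ _
      _ ≤ ρ := by linarith [hz n hn, hw n hn]
  · have hshift : ∀ v, (f ^ n) v = (f ^ (n + 1)) (f.symm v) := fun v => by
      rw [f.zpow_symm_apply, add_sub_cancel_right]
    rw [hshift z, hshift w]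
    calc dist ((f ^ (n + 1)) (f.symm z)) ((f ^ (n + 1)) (f.symm w))
        ≤ dist ((f ^ (n + 1)) y) ((f ^ (n + 1)) (f.symm z))
          + dist ((f ^ (n + 1)) y) ((f ^ (n + 1)) (f.symm w)) := dist_triangle_left _ _ _
      _ ≤ ρ := by linarith [hz' (n + 1) (by omega), hw' (n + 1) (by omega)]

theorem bracket_mem_epsStable {br : X → X → X}
    (hbr : ∀ x y : X, dist x y < δ → epsStable f ε x ∩ epsUnstable f ε y = {br x y})
    (h : dist x y < δ) : br x y ∈ epsStable f ε x :=
  ((hbr x y h).symm ▸ Set.mem_singleton (br x y)).1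

theorem bracket_mem_epsUnstable {br : X → X → X}
    (hbr : ∀ x y : X, dist x y < δ → epsStable f ε x ∩ epsUnstable f ε y = {br x y})
    (h : dist x y < δ) : br x y ∈ epsUnstable f ε y :=
  ((hbr x y h).symm ▸ Set.mem_singleton (br x y)).2

end Dynamics

theorem IsRectangle.dist_lt {X : Type*} [MetricSpace X] [CompactSpace X] {δ : ℝ}
    {br : X → X → X} {S : Set X} (hS : IsRectangle δ br S) {x y : X} (hx : x ∈ S) (hy : y ∈ S) :
    dist x y < δ :=
  (Metric.dist_le_diam_of_mem isBounded_of_compactSpace hx hy).trans_lt hS.2.1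

section Cylinder

variable {X : Type*} {f : Equiv.Perm X} {m : ℕ} {R : Fin m → Set X} {a : ℤ → Fin m}

/-- The paper's `K_N(a)` is `cylinder f R a (Icc (-N) N)`. -/
def cylinder (f : Equiv.Perm X) (R : Fin m → Set X) (a : ℤ → Fin m) (s : Set ℤ) : Set X :=
  ⋂ j ∈ s, ⇑(f ^ j) ⁻¹' R (a j)

theorem mem_cylinder {s : Set ℤ} {z : X} :
    z ∈ cylinder f R a s ↔ ∀ j ∈ s, (f ^ j) z ∈ R (a j) := by
  simp only [cylinder, Set.mem_iInter, Set.mem_preimage]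

theorem cylinder_anti {s t : Set ℤ} (h : s ⊆ t) : cylinder f R a t ⊆ cylinder f R a s :=
  Set.biInter_subset_biInter_left h

end Cylinder

theorem IsMarkovPartition.isClosed_cylinder {X : Type*} [MetricSpace X] {f : Equiv.Perm X}
    {ε δ : ℝ} {br : X → X → X} {m : ℕ} {R : Fin m → Set X} {a : ℤ → Fin m}
    (hMP : IsMarkovPartition f ε δ br R) (hf : Continuous ⇑f) (hf' : Continuous ⇑f.symm)
    (s : Set ℤ) : IsClosed (cylinder f R a s) :=
  isClosed_biInter fun j _ =>
    ((hMP.2.1 (a j)).symm ▸ isClosed_closure).preimage (continuous_zpow_apply hf hf' j)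

namespace IsMarkovPartition

variable {X : Type*} [MetricSpace X] [CompactSpace X] {f : Equiv.Perm X} {ρ ε δ : ℝ}
  {br : X → X → X} {m : ℕ} {R : Fin m → Set X} {a : ℤ → Fin m} {i j : Fin m} {p q u x y z : X}

/-- The Markov inclusion `f(W^s(x, R_i)) ⊆ W^s(f x, R_j)`, required only at interior points,
holds along the stable set of every `p` with `f p ∈ R_j`. -/
theorem apply_mem_of_mem_epsStable (hMP : IsMarkovPartition f ε δ br R)
    (hexp : IsExpansiveWith f ρ) (hε : 2 * ε ≤ ρ)
    (hbr : ∀ x y : X, dist x y < δ → epsStable f ε x ∩ epsUnstable f ε y = {br x y})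
    (hij : (interior (R i) ∩ ⇑f ⁻¹' interior (R j)).Nonempty)
    (hfp : f p ∈ R j) (hq : q ∈ epsStable f ε p) (hqR : q ∈ R i) : f q ∈ R j := by
  obtain ⟨x, hx⟩ := hij
  have hxR : x ∈ R i := interior_subset hx.1
  -- `b = [x, q]` lies on the stable set of the interior point `x`, where the Markov property holds
  set b := br x q
  have hb : dist x q < δ := (hMP.1 i).dist_lt hxR hqR
  have hfbR : f b ∈ R j :=
    ((hMP.2.2.2.2 i j x hx).1 ⟨b, ⟨bracket_mem_epsStable hbr hb, (hMP.1 i).2.2 x hxR q hqR⟩,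
      rfl⟩).2
  have hd : dist (f p) (f b) < δ := (hMP.1 j).dist_lt hfp hfbR
  have hfq : br (f p) (f b) = f q :=
    hexp.eq_of_mem_epsStable_of_symm_mem_epsUnstable (y := b) hε (bracket_mem_epsStable hbr hd)
      (apply_mem_epsStable hq)
      (by simpa using symm_mem_epsUnstable (bracket_mem_epsUnstable hbr hd))
      (by simpa using mem_epsUnstable_comm.1 (bracket_mem_epsUnstable hbr hb))
  exact hfq ▸ (hMP.1 j).2.2 _ hfp _ hfbR

/-- The Markov inclusion `W^u(f x, R_j) ⊆ f(W^u(x, R_i))`, extended in the same way. -/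
theorem symm_mem_of_mem_epsUnstable (hMP : IsMarkovPartition f ε δ br R)
    (hexp : IsExpansiveWith f ρ) (hε : 2 * ε ≤ ρ)
    (hbr : ∀ x y : X, dist x y < δ → epsStable f ε x ∩ epsUnstable f ε y = {br x y})
    (hij : (interior (R i) ∩ ⇑f ⁻¹' interior (R j)).Nonempty)
    (hp : p ∈ R i) (hu : u ∈ epsUnstable f ε (f p)) (huR : u ∈ R j) : f.symm u ∈ R i := by
  obtain ⟨x, hx⟩ := hij
  have hfxR : f x ∈ R j := interior_subset hx.2
  have hc : dist u (f x) < δ := (hMP.1 j).dist_lt huR hfxR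
  obtain ⟨v, ⟨-, hvR⟩, hfv⟩ := (hMP.2.2.2.2 i j x hx).2
    ⟨bracket_mem_epsUnstable hbr hc, (hMP.1 j).2.2 u huR (f x) hfxR⟩
  have hd : dist v p < δ := (hMP.1 i).dist_lt hvR hp
  have hu' : f (br v p) = u :=
    hexp.eq_of_mem_epsStable_of_symm_mem_epsUnstable (x := f v) (y := p) hε
      (apply_mem_epsStable (bracket_mem_epsStable hbr hd))
      (hfv ▸ mem_epsStable_comm.1 (bracket_mem_epsStable hbr hc))
      (by simpa using bracket_mem_epsUnstable hbr hd)
      (by simpa using symm_mem_epsUnstable hu)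
  rw [← hu', Equiv.symm_apply_apply]
  exact (hMP.1 i).2.2 v hvR p hp

theorem mem_cylinder_of_mem_epsStable (hMP : IsMarkovPartition f ε δ br R)
    (hexp : IsExpansiveWith f ρ) (hε : 2 * ε ≤ ρ)
    (hbr : ∀ x y : X, dist x y < δ → epsStable f ε x ∩ epsUnstable f ε y = {br x y})
    (ha : ∀ i : ℤ, (interior (R (a i)) ∩ ⇑f ⁻¹' interior (R (a (i + 1)))).Nonempty)
    {k n : ℤ} (hx : x ∈ cylinder f R a (Set.Icc k n))
    (hz : (f ^ k) z ∈ epsStable f ε ((f ^ k) x)) (hzR : (f ^ k) z ∈ R (a k)) :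
    z ∈ cylinder f R a (Set.Icc k n) := by
  suffices h : ∀ j, k ≤ j → j ≤ n →
      (f ^ j) z ∈ epsStable f ε ((f ^ j) x) ∧ (f ^ j) z ∈ R (a j) from
    mem_cylinder.2 fun j hj => (h j hj.1 hj.2).2
  intro j hkj
  induction j, hkj using Int.leInduction with
  | base => exact fun _ => ⟨hz, hzR⟩
  | succ j hkj ih =>
    intro hjn
    obtain ⟨hS, hR⟩ := ih (by omega)
    have hfx : f ((f ^ j) x) ∈ R (a (j + 1)) :=
      f.apply_zpow_apply j x ▸ mem_cylinder.1 hx (j + 1) ⟨by omega, hjn⟩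
    rw [← f.apply_zpow_apply, ← f.apply_zpow_apply]
    exact ⟨apply_mem_epsStable hS, hMP.apply_mem_of_mem_epsStable hexp hε hbr (ha j) hfx hS hR⟩

theorem mem_cylinder_of_mem_epsUnstable (hMP : IsMarkovPartition f ε δ br R)
    (hexp : IsExpansiveWith f ρ) (hε : 2 * ε ≤ ρ)
    (hbr : ∀ x y : X, dist x y < δ → epsStable f ε x ∩ epsUnstable f ε y = {br x y})
    (ha : ∀ i : ℤ, (interior (R (a i)) ∩ ⇑f ⁻¹' interior (R (a (i + 1)))).Nonempty)
    {k n : ℤ} (hy : y ∈ cylinder f R a (Set.Icc k n))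
    (hz : (f ^ n) z ∈ epsUnstable f ε ((f ^ n) y)) (hzR : (f ^ n) z ∈ R (a n)) :
    z ∈ cylinder f R a (Set.Icc k n) := by
  suffices h : ∀ j, j ≤ n → k ≤ j →
      (f ^ j) z ∈ epsUnstable f ε ((f ^ j) y) ∧ (f ^ j) z ∈ R (a j) from
    mem_cylinder.2 fun j hj => (h j hj.2 hj.1).2
  intro j hjn
  induction j, hjn using Int.leInductionDown with
  | base => exact fun _ => ⟨hz, hzR⟩
  | pred j hjn ih =>
    intro hkj
    obtain ⟨hU, hR⟩ := ih (by omega)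
    have hyR : (f ^ (j - 1)) y ∈ R (a (j - 1)) := mem_cylinder.1 hy (j - 1) ⟨hkj, by omega⟩
    have hfy : f ((f ^ (j - 1)) y) = (f ^ j) y := by rw [f.apply_zpow_apply, sub_add_cancel]
    rw [← f.symm_zpow_apply, ← f.symm_zpow_apply]
    exact ⟨symm_mem_epsUnstable hU, hMP.symm_mem_of_mem_epsUnstable hexp hε hbr
      (by simpa using ha (j - 1)) hyR (hfy ▸ hU) hR⟩

theorem bracket_mem_cylinder (hMP : IsMarkovPartition f ε δ br R)
    (hexp : IsExpansiveWith f ρ) (hε : 2 * ε ≤ ρ)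
    (hbr : ∀ x y : X, dist x y < δ → epsStable f ε x ∩ epsUnstable f ε y = {br x y})
    (ha : ∀ i : ℤ, (interior (R (a i)) ∩ ⇑f ⁻¹' interior (R (a (i + 1)))).Nonempty)
    {lo hi : ℤ} (hlo : lo ≤ 0) (hhi : 0 ≤ hi) (hx : x ∈ cylinder f R a (Set.Icc lo hi))
    (hy : y ∈ cylinder f R a (Set.Icc lo hi)) : br x y ∈ cylinder f R a (Set.Icc lo hi) := by
  have hx0 : x ∈ R (a 0) := by simpa using mem_cylinder.1 hx 0 ⟨hlo, hhi⟩
  have hy0 : y ∈ R (a 0) := by simpa using mem_cylinder.1 hy 0 ⟨hlo, hhi⟩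
  have hd : dist x y < δ := (hMP.1 _).dist_lt hx0 hy0
  have hbR : br x y ∈ R (a 0) := (hMP.1 _).2.2 x hx0 y hy0
  have hfwd : br x y ∈ cylinder f R a (Set.Icc 0 hi) :=
    hMP.mem_cylinder_of_mem_epsStable hexp hε hbr ha
      (cylinder_anti (Set.Icc_subset_Icc_left hlo) hx)
      (by simpa using bracket_mem_epsStable hbr hd) (by simpa using hbR)
  have hbwd : br x y ∈ cylinder f R a (Set.Icc lo 0) :=
    hMP.mem_cylinder_of_mem_epsUnstable hexp hε hbr ha
      (cylinder_anti (Set.Icc_subset_Icc_right hhi) hy)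
      (by simpa using bracket_mem_epsUnstable hbr hd) (by simpa using hbR)
  exact mem_cylinder.2 fun j hj => (le_total j 0).elim
    (fun hj0 => mem_cylinder.1 hbwd j ⟨hj.1, hj0⟩) (fun hj0 => mem_cylinder.1 hfwd j ⟨hj0, hj.2⟩)

theorem cylinder_Icc_nonempty (hMP : IsMarkovPartition f ε δ br R)
    (hexp : IsExpansiveWith f ρ) (hε : 2 * ε ≤ ρ)
    (hbr : ∀ x y : X, dist x y < δ → epsStable f ε x ∩ epsUnstable f ε y = {br x y})
    (ha : ∀ i : ℤ, (interior (R (a i)) ∩ ⇑f ⁻¹' interior (R (a (i + 1)))).Nonempty)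
    {lo hi : ℤ} (h : lo ≤ hi) : (cylinder f R a (Set.Icc lo hi)).Nonempty := by
  induction lo, h using Int.leInductionDown with
  | base =>
    obtain ⟨z, hz⟩ := (hMP.1 (a hi)).1
    refine ⟨(f ^ hi).symm z, mem_cylinder.2 fun j hj => ?_⟩
    obtain rfl : j = hi := le_antisymm hj.2 hj.1
    simpa using hz
  | pred lo hlo ih =>
    obtain ⟨z, hz⟩ := ih
    obtain ⟨x, hx⟩ := ha (lo - 1)
    rw [sub_add_cancel] at hx
    have hfxR : f x ∈ R (a lo) := interior_subset hx.2
    have hzR : (f ^ lo) z ∈ R (a lo) := mem_cylinder.1 hz lo ⟨le_rfl, hlo⟩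
    -- `u = [f^lo z, f x]` follows `z` forward and `x` backward
    set u := br ((f ^ lo) z) (f x)
    have hd : dist ((f ^ lo) z) (f x) < δ := (hMP.1 _).dist_lt hzR hfxR
    have huR : u ∈ R (a lo) := (hMP.1 _).2.2 _ hzR _ hfxR
    have hu : (f ^ lo) ((f ^ lo).symm u) = u := Equiv.apply_symm_apply _ u
    have hfwd : (f ^ lo).symm u ∈ cylinder f R a (Set.Icc lo hi) :=
      hMP.mem_cylinder_of_mem_epsStable hexp hε hbr ha hz
        (by rw [hu]; exact bracket_mem_epsStable hbr hd) (by rw [hu]; exact huR)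
    have hback : (f ^ (lo - 1)) ((f ^ lo).symm u) ∈ R (a (lo - 1)) := by
      rw [← f.symm_zpow_apply, hu]
      exact hMP.symm_mem_of_mem_epsUnstable hexp hε hbr ⟨x, hx⟩ (interior_subset hx.1)
        (bracket_mem_epsUnstable hbr hd) huR
    refine ⟨(f ^ lo).symm u, mem_cylinder.2 fun j hj => ?_⟩
    rcases eq_or_lt_of_le hj.1 with rfl | hj1
    · exact hback
    · exact mem_cylinder.1 hfwd j ⟨by omega, hj.2⟩

theorem isRectangle_cylinder_Icc (hMP : IsMarkovPartition f ε δ br R)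
    (hexp : IsExpansiveWith f ρ) (hε : 2 * ε ≤ ρ)
    (hbr : ∀ x y : X, dist x y < δ → epsStable f ε x ∩ epsUnstable f ε y = {br x y})
    (ha : ∀ i : ℤ, (interior (R (a i)) ∩ ⇑f ⁻¹' interior (R (a (i + 1)))).Nonempty)
    {lo hi : ℤ} (hlo : lo ≤ 0) (hhi : 0 ≤ hi) :
    IsRectangle δ br (cylinder f R a (Set.Icc lo hi)) :=
  have hsub : cylinder f R a (Set.Icc lo hi) ⊆ R (a 0) := fun _ hz => by
    simpa using mem_cylinder.1 hz 0 ⟨hlo, hhi⟩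
  ⟨hMP.cylinder_Icc_nonempty hexp hε hbr ha (hlo.trans hhi),
    (Metric.diam_mono hsub isBounded_of_compactSpace).trans_lt (hMP.1 (a 0)).2.1,
    fun _ hx _ hy => hMP.bracket_mem_cylinder hexp hε hbr ha hlo hhi hx hy⟩

end IsMarkovPartition

theorem stmt_18_general (f : Equiv.Perm M) (hf : Continuous ⇑f) (hf' : Continuous ⇑f.symm)
    (ρ ε δ : ℝ) (hexp : IsExpansiveWith f ρ)
    (hε0 : 0 < ε) (hε : ε ≤ ρ / 4) (br : M → M → M)
    (hbr : ∀ x y : M, dist x y < δ → epsStable f ε x ∩ epsUnstable f ε y = {br x y})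
    {m : ℕ} (R : Fin m → Set M) (hMP : IsMarkovPartition f ε δ br R)
    (a : ℤ → Fin m)
    (ha : ∀ i : ℤ, (interior (R (a i)) ∩ ⇑f ⁻¹' interior (R (a (i + 1)))).Nonempty)
    (N : ℕ) :
    IsClosed (⋂ j ∈ Set.Icc (-(N : ℤ)) (N : ℤ), ⇑(f ^ j) ⁻¹' R (a j)) ∧
    IsRectangle δ br (⋂ j ∈ Set.Icc (-(N : ℤ)) (N : ℤ), ⇑(f ^ j) ⁻¹' R (a j)) := by
  have hε2 : 2 * ε ≤ ρ := by linarith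
  exact ⟨hMP.isClosed_cylinder hf hf' _,
    hMP.isRectangle_cylinder_Icc hexp hε2 hbr ha (by omega) (by omega)⟩

/-- For a Markov partition of diameter less than `ρ` with transition matrix `A`
and `a ∈ Σ_A`, each finite intersection `K_N(a) = ⋂_{|j| ≤ N} f^{-j}(R_{a_j})` is a nonempty
closed rectangle. -/
theorem stmt_18 (f : Equiv.Perm M) (hf : Continuous ⇑f) (hf' : Continuous ⇑f.symm)
    (ρ ε δ : ℝ) (hρ : 0 < ρ) (hexp : IsExpansiveWith f ρ)
    (hε0 : 0 < ε) (hε : ε ≤ ρ / 4) (hδ : 0 < δ) (br : M → M → M)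
    (hbr : ∀ x y : M, dist x y < δ → epsStable f ε x ∩ epsUnstable f ε y = {br x y})
    {m : ℕ} (R : Fin m → Set M) (hMP : IsMarkovPartition f ε δ br R)
    (hdiam : ∀ i, Metric.diam (R i) < ρ)
    (a : ℤ → Fin m)
    (ha : ∀ i : ℤ, (interior (R (a i)) ∩ ⇑f ⁻¹' interior (R (a (i + 1)))).Nonempty)
    (N : ℕ) :
    IsClosed (⋂ j ∈ Set.Icc (-(N : ℤ)) (N : ℤ), ⇑(f ^ j) ⁻¹' R (a j)) ∧
    IsRectangle δ br (⋂ j ∈ Set.Icc (-(N : ℤ)) (N : ℤ), ⇑(f ^ j) ⁻¹' R (a j)) :=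
  stmt_18_general f hf hf' ρ ε δ hexp hε0 hε br hbr R hMP a ha N
end
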